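/- A bijection g between two open proper convex cones is gauge-reversing if and only if g is order-reversing, homogeneous of degree −1, and g^{-1} is order-reversing. -/

import Mathlib

/-!
Writing `x ≤ y` for `y - x ∈ closure C`, the gauge `M(x/y; C)` is the least `l > 0` with
`x ≤ l • y` (attained since `closure C` is closed, positive since the cone is proper), and by
convexity every larger `l` is admissible. So `M(x/y) ≤ l ↔ x ≤ l • y`: the order is `M ≤ 1`,
and `M(c • x / x) = c`. Hence a gauge-reversing map reverses the order both ways, and the
values `c⁻¹` and `c` of `M(g(c • x)/g x)` and `M(g x/g(c • x))` force `g (c • x) = c⁻¹ • g x`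
by antisymmetry; conversely, order reversal and homogeneity turn `y ≤ l • x` into
`l⁻¹ • g x ≤ g y`. An open proper cone contains `0` only in the zero space, where everything
is trivial.
-/

open Set Filter Topology

section ConeGauge

variable {V : Type*} [NormedAddCommGroup V] [NormedSpace ℝ V] {C : Set V}

theorem zero_mem_closure_of_smul_mem (hne : C.Nonempty)
    (hcone : ∀ (c : ℝ), 0 < c → ∀ x ∈ C, c • x ∈ C) : (0 : V) ∈ closure C := by
  obtain ⟨x, hx⟩ := hne
  have hlim : Tendsto (fun t : ℝ => t • x) (𝓝[>] 0) (𝓝 0) :=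
    ((continuous_id.smul continuous_const).tendsto' 0 0 (zero_smul ℝ x)).mono_left
      nhdsWithin_le_nhds
  exact mem_closure_of_tendsto hlim
    (eventually_nhdsWithin_of_forall fun t ht => hcone t ht x hx)

theorem smul_mem_closure_iff_of_pos (hcone : ∀ (c : ℝ), 0 < c → ∀ x ∈ C, c • x ∈ C)
    {c : ℝ} (hc : 0 < c) {v : V} : c • v ∈ closure C ↔ v ∈ closure C := by
  have hsmul : ∀ a : ℝ, 0 < a → ∀ w ∈ closure C, a • w ∈ closure C := fun a ha w hw =>
    map_mem_closure (continuous_const_smul a) hw (hcone a ha)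
  refine ⟨fun h => ?_, hsmul c hc v⟩
  simpa [smul_smul, inv_mul_cancel₀ hc.ne'] using hsmul c⁻¹ (inv_pos.2 hc) _ h

theorem smul_mem_closure_of_nonneg (hne : C.Nonempty)
    (hcone : ∀ (c : ℝ), 0 < c → ∀ x ∈ C, c • x ∈ C)
    {c : ℝ} (hc : 0 ≤ c) {v : V} (hv : v ∈ closure C) : c • v ∈ closure C := by
  rcases hc.eq_or_lt with rfl | hc
  · simpa using zero_mem_closure_of_smul_mem hne hcone
  · exact (smul_mem_closure_iff_of_pos hcone hc).2 hv

theorem add_mem_closure_of_convex (hconv : Convex ℝ C)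
    (hcone : ∀ (c : ℝ), 0 < c → ∀ x ∈ C, c • x ∈ C)
    {u v : V} (hu : u ∈ closure C) (hv : v ∈ closure C) : u + v ∈ closure C := by
  have hmid := hconv.closure hu hv (by norm_num : (0 : ℝ) ≤ 2⁻¹)
    (by norm_num : (0 : ℝ) ≤ 2⁻¹) (by norm_num)
  rw [← smul_add] at hmid
  exact (smul_mem_closure_iff_of_pos hcone (by norm_num)).1 hmid

theorem smul_sub_mem_closure_iff (hcone : ∀ (c : ℝ), 0 < c → ∀ x ∈ C, c • x ∈ C)
    {l : ℝ} (hl : 0 < l) {u v : V} :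
    l • u - v ∈ closure C ↔ u - l⁻¹ • v ∈ closure C := by
  rw [← smul_mem_closure_iff_of_pos hcone hl (v := u - l⁻¹ • v), smul_sub,
    smul_inv_smul₀ hl.ne']

theorem smul_mem_closure_iff_nonneg (hne : C.Nonempty)
    (hcone : ∀ (c : ℝ), 0 < c → ∀ x ∈ C, c • x ∈ C)
    (hproper : ∀ v ∈ closure C, -v ∈ closure C → v = 0) (h0 : (0 : V) ∉ C)
    {x : V} (hx : x ∈ C) {c : ℝ} : c • x ∈ closure C ↔ 0 ≤ c := by
  refine ⟨fun h => not_lt.1 fun hc => ?_, fun hc => smul_mem_closure_of_nonneg hne hcone hc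
    (subset_closure hx)⟩
  have hneg : -(c • x) ∈ closure C := by
    simpa [neg_smul] using smul_mem_closure_of_nonneg hne hcone (neg_nonneg.2 hc.le)
      (subset_closure hx)
  rcases smul_eq_zero.1 (hproper _ h hneg) with rfl | rfl
  · exact lt_irrefl 0 hc
  · exact h0 hx

theorem zero_notMem_of_nontrivial [Nontrivial V] (hopen : IsOpen C)
    (hproper : ∀ v ∈ closure C, -v ∈ closure C → v = 0) : (0 : V) ∉ C := by
  intro h0
  have hsymm : C ∩ -C ∈ 𝓝[≠] (0 : V) := mem_nhdsWithin_of_mem_nhds <|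
    inter_mem (hopen.mem_nhds h0) (neg_mem_nhds_zero _ (hopen.mem_nhds h0))
  obtain ⟨v, ⟨hv, hv'⟩, hne⟩ := Filter.nonempty_of_mem (inter_mem hsymm self_mem_nhdsWithin)
  exact hne (hproper v (subset_closure hv) (subset_closure hv'))

theorem IsOpen.subsingleton_iff {s : Set V} (hs : IsOpen s) (hne : s.Nonempty) :
    s.Subsingleton ↔ Subsingleton V := by
  refine ⟨fun h => ?_, fun _ => subsingleton_of_subsingleton⟩
  obtain ⟨x, hx⟩ := hne
  by_contra hV
  rw [not_subsingleton_iff_nontrivial] at hV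
  exact not_isOpen_singleton x (h.eq_singleton_of_mem hx ▸ hs)

theorem exists_pos_smul_sub_mem (hopen : IsOpen C)
    (hcone : ∀ (c : ℝ), 0 < c → ∀ x ∈ C, c • x ∈ C) {y : V} (hy : y ∈ C) (x : V) :
    ∃ l : ℝ, 0 < l ∧ l • y - x ∈ C := by
  have hcont : Continuous fun t : ℝ => y - t • x := by fun_prop
  have hnear : ∀ᶠ t in 𝓝[>] (0 : ℝ), y - t • x ∈ C :=
    mem_nhdsWithin_of_mem_nhds ((hcont.tendsto' 0 y (by simp)).eventually (hopen.mem_nhds hy))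
  obtain ⟨t, hyt, ht⟩ := (hnear.and self_mem_nhdsWithin).exists
  refine ⟨t⁻¹, inv_pos.2 ht, ?_⟩
  simpa [smul_sub, smul_smul, inv_mul_cancel₀ ht.ne'] using hcone _ (inv_pos.2 ht) _ hyt

theorem subsingleton_iff_of_bijOn {V' : Type*} [NormedAddCommGroup V'] [NormedSpace ℝ V']
    {C' : Set V'} (hopen : IsOpen C) (hne : C.Nonempty) (hopen' : IsOpen C') {g : V → V'}
    (hg : BijOn g C C') : Subsingleton V ↔ Subsingleton V' := by
  rw [← hopen.subsingleton_iff hne, ← hopen'.subsingleton_iff (hg.image_eq ▸ hne.image g),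
    ← hg.image_eq]
  exact ⟨fun h => h.image g, fun h a ha b hb =>
    hg.injOn ha hb (h (mem_image_of_mem g ha) (mem_image_of_mem g hb))⟩

/-- The gauge `M(x/y; C)`. -/
noncomputable def coneGauge (C : Set V) (x y : V) : ℝ :=
  sInf {l : ℝ | 0 < l ∧ l • y - x ∈ closure C}

theorem isLeast_coneGauge (hopen : IsOpen C)
    (hcone : ∀ (c : ℝ), 0 < c → ∀ x ∈ C, c • x ∈ C)
    (hproper : ∀ v ∈ closure C, -v ∈ closure C → v = 0) (h0 : (0 : V) ∉ C)
    {x y : V} (hx : x ∈ C) (hy : y ∈ C) :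
    IsLeast {l : ℝ | 0 < l ∧ l • y - x ∈ closure C} (coneGauge C x y) := by
  obtain ⟨l, hl, hlC⟩ := exists_pos_smul_sub_mem hopen hcone hy x
  have hne : {l : ℝ | 0 < l ∧ l • y - x ∈ closure C}.Nonempty :=
    ⟨l, hl, subset_closure hlC⟩
  have hbdd : BddBelow {l : ℝ | 0 < l ∧ l • y - x ∈ closure C} :=
    ⟨0, fun l hl => hl.1.le⟩
  have hclosed : IsClosed {l : ℝ | l • y - x ∈ closure C} :=
    isClosed_closure.preimage (by fun_prop)
  have hmem : coneGauge C x y • y - x ∈ closure C :=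
    hclosed.closure_subset_iff.2 (fun l hl => hl.2) (csInf_mem_closure hne hbdd)
  have hpos : 0 < coneGauge C x y := by
    refine (le_csInf hne fun l hl => hl.1.le).lt_of_ne fun h => h0 ?_
    rw [coneGauge, ← h, zero_smul, zero_sub] at hmem
    exact hproper x (subset_closure hx) hmem ▸ hx
  exact ⟨⟨hpos, hmem⟩, fun l hl => csInf_le hbdd hl⟩

theorem coneGauge_le_iff (hopen : IsOpen C) (hconv : Convex ℝ C) (hne : C.Nonempty)
    (hcone : ∀ (c : ℝ), 0 < c → ∀ x ∈ C, c • x ∈ C)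
    (hproper : ∀ v ∈ closure C, -v ∈ closure C → v = 0) (h0 : (0 : V) ∉ C)
    {x y : V} (hx : x ∈ C) (hy : y ∈ C) {l : ℝ} :
    coneGauge C x y ≤ l ↔ 0 < l ∧ l • y - x ∈ closure C := by
  obtain ⟨⟨hpos, hmem⟩, hleast⟩ := isLeast_coneGauge hopen hcone hproper h0 hx hy
  refine ⟨fun h => ⟨hpos.trans_le h, ?_⟩, fun hl => hleast hl⟩
  have hsplit : l • y - x = (coneGauge C x y • y - x) + (l - coneGauge C x y) • y := by
    rw [sub_smul]; abel
  rw [hsplit]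
  exact add_mem_closure_of_convex hconv hcone hmem
    (smul_mem_closure_of_nonneg hne hcone (sub_nonneg.2 h) (subset_closure hy))

theorem sub_mem_closure_iff_coneGauge_le_one (hopen : IsOpen C) (hconv : Convex ℝ C)
    (hne : C.Nonempty) (hcone : ∀ (c : ℝ), 0 < c → ∀ x ∈ C, c • x ∈ C)
    (hproper : ∀ v ∈ closure C, -v ∈ closure C → v = 0) (h0 : (0 : V) ∉ C)
    {x y : V} (hx : x ∈ C) (hy : y ∈ C) : y - x ∈ closure C ↔ coneGauge C x y ≤ 1 := by
  simp [coneGauge_le_iff hopen hconv hne hcone hproper h0 hx hy]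

theorem coneGauge_smul_smul (hopen : IsOpen C) (hconv : Convex ℝ C) (hne : C.Nonempty)
    (hcone : ∀ (c : ℝ), 0 < c → ∀ x ∈ C, c • x ∈ C)
    (hproper : ∀ v ∈ closure C, -v ∈ closure C → v = 0) (h0 : (0 : V) ∉ C)
    {x : V} (hx : x ∈ C) {a b : ℝ} (ha : 0 < a) (hb : 0 < b) :
    coneGauge C (a • x) (b • x) = a / b := by
  refine eq_of_forall_ge_iff fun l => ?_
  rw [coneGauge_le_iff hopen hconv hne hcone hproper h0 (hcone a ha x hx) (hcone b hb x hx),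
    smul_smul, ← sub_smul, smul_mem_closure_iff_nonneg hne hcone hproper h0 hx, sub_nonneg,
    div_le_iff₀ hb]
  exact ⟨And.right, fun h => ⟨pos_of_mul_pos_left (ha.trans_le h) hb.le, h⟩⟩

end ConeGauge

section GaugeReversing

variable {V V' : Type*} [NormedAddCommGroup V] [NormedSpace ℝ V]
  [NormedAddCommGroup V'] [NormedSpace ℝ V'] {C : Set V} {C' : Set V'} {g : V → V'}

theorem smul_eq_inv_smul_of_gaugeReversing (hopen : IsOpen C) (hconv : Convex ℝ C)
    (hne : C.Nonempty) (hcone : ∀ (c : ℝ), 0 < c → ∀ x ∈ C, c • x ∈ C)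
    (hproper : ∀ v ∈ closure C, -v ∈ closure C → v = 0) (h0 : (0 : V) ∉ C)
    (hopen' : IsOpen C') (hconv' : Convex ℝ C') (hne' : C'.Nonempty)
    (hcone' : ∀ (c : ℝ), 0 < c → ∀ x ∈ C', c • x ∈ C')
    (hproper' : ∀ v ∈ closure C', -v ∈ closure C' → v = 0) (h0' : (0 : V') ∉ C')
    (hg : MapsTo g C C')
    (hgr : ∀ x ∈ C, ∀ y ∈ C, coneGauge C' (g x) (g y) = coneGauge C y x)
    {c : ℝ} (hc : 0 < c) {x : V} (hx : x ∈ C) : g (c • x) = c⁻¹ • g x := by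
  have hcx := hcone c hc x hx
  have hle_inv : coneGauge C' (g (c • x)) (g x) ≤ c⁻¹ := by
    rw [hgr _ hcx _ hx]
    simpa using (coneGauge_smul_smul hopen hconv hne hcone hproper h0 hx one_pos hc).le
  have hle : coneGauge C' (g x) (g (c • x)) ≤ c := by
    rw [hgr _ hx _ hcx]
    simpa using (coneGauge_smul_smul hopen hconv hne hcone hproper h0 hx hc one_pos).le
  rw [coneGauge_le_iff hopen' hconv' hne' hcone' hproper' h0' (hg hcx) (hg hx)] at hle_inv
  rw [coneGauge_le_iff hopen' hconv' hne' hcone' hproper' h0' (hg hx) (hg hcx),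
    smul_sub_mem_closure_iff hcone' hc] at hle
  exact sub_eq_zero.1 (hproper' _ hle.2 (by rw [neg_sub]; exact hle_inv.2))

theorem gaugeReversing_of_antitone (hopen : IsOpen C) (hconv : Convex ℝ C)
    (hne : C.Nonempty) (hcone : ∀ (c : ℝ), 0 < c → ∀ x ∈ C, c • x ∈ C)
    (hproper : ∀ v ∈ closure C, -v ∈ closure C → v = 0) (h0 : (0 : V) ∉ C)
    (hopen' : IsOpen C') (hconv' : Convex ℝ C') (hne' : C'.Nonempty)
    (hcone' : ∀ (c : ℝ), 0 < c → ∀ x ∈ C', c • x ∈ C')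
    (hproper' : ∀ v ∈ closure C', -v ∈ closure C' → v = 0) (h0' : (0 : V') ∉ C')
    (hg : MapsTo g C C')
    (hanti : ∀ x ∈ C, ∀ y ∈ C, y - x ∈ closure C → g x - g y ∈ closure C')
    (hhom : ∀ (c : ℝ), 0 < c → ∀ x ∈ C, g (c • x) = c⁻¹ • g x)
    (hanti_inv : ∀ x ∈ C, ∀ y ∈ C, g y - g x ∈ closure C' → x - y ∈ closure C)
    {x : V} (hx : x ∈ C) {y : V} (hy : y ∈ C) : coneGauge C' (g x) (g y) = coneGauge C y x := by
  refine eq_of_forall_ge_iff fun l => ?_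
  rw [coneGauge_le_iff hopen' hconv' hne' hcone' hproper' h0' (hg hx) (hg hy),
    coneGauge_le_iff hopen hconv hne hcone hproper h0 hy hx]
  refine and_congr_right fun hl => ?_
  have hlx := hcone l hl x hx
  rw [smul_sub_mem_closure_iff hcone' hl, ← hhom l hl x hx]
  exact ⟨hanti_inv _ hlx _ hy, hanti _ hy _ hlx⟩

end GaugeReversing

theorem gaugeReversing_iff_general
    {V V' : Type*}
    [NormedAddCommGroup V] [NormedSpace ℝ V]
    [NormedAddCommGroup V'] [NormedSpace ℝ V']
    (C : Set V) (C' : Set V')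
    (hopen : IsOpen C) (hconv : Convex ℝ C) (hne : C.Nonempty)
    (hcone : ∀ (c : ℝ), 0 < c → ∀ x ∈ C, c • x ∈ C)
    (hproper : ∀ v ∈ closure C, -v ∈ closure C → v = 0)
    (hopen' : IsOpen C') (hconv' : Convex ℝ C') (hne' : C'.Nonempty)
    (hcone' : ∀ (c : ℝ), 0 < c → ∀ x ∈ C', c • x ∈ C')
    (hproper' : ∀ v ∈ closure C', -v ∈ closure C' → v = 0)
    (M : V → V → ℝ) (hM : ∀ x y, M x y = sInf {l : ℝ | 0 < l ∧ l • y - x ∈ closure C})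
    (M' : V' → V' → ℝ)
    (hM' : ∀ x y, M' x y = sInf {l : ℝ | 0 < l ∧ l • y - x ∈ closure C'})
    (g : V → V') (hg : Set.BijOn g C C') :
    (∀ x ∈ C, ∀ y ∈ C, M' (g x) (g y) = M y x) ↔
    ((∀ x ∈ C, ∀ y ∈ C, y - x ∈ closure C → g x - g y ∈ closure C') ∧
     (∀ (c : ℝ), 0 < c → ∀ x ∈ C, g (c • x) = c⁻¹ • g x) ∧
     (∀ x ∈ C, ∀ y ∈ C, g y - g x ∈ closure C' → x - y ∈ closure C)) := by
  obtain rfl : M = coneGauge C := funext fun x => funext (hM x)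
  obtain rfl : M' = coneGauge C' := funext fun x => funext (hM' x)
  rcases subsingleton_or_nontrivial V with hV | hV
  · have : Subsingleton V' := (subsingleton_iff_of_bijOn hopen hne hopen' hg).1 hV
    simp [coneGauge, hne.eq_univ, hne'.eq_univ, Subsingleton.elim _ (0 : V')]
  have : Nontrivial V' := by
    rw [← not_subsingleton_iff_nontrivial, ← subsingleton_iff_of_bijOn hopen hne hopen' hg]
    exact not_subsingleton V
  have h0 := zero_notMem_of_nontrivial hopen hproper
  have h0' := zero_notMem_of_nontrivial hopen' hproper'
  have hle : ∀ {x y : V}, x ∈ C → y ∈ C →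
      (y - x ∈ closure C ↔ coneGauge C x y ≤ 1) :=
    sub_mem_closure_iff_coneGauge_le_one hopen hconv hne hcone hproper h0
  have hle' : ∀ {x y : V'}, x ∈ C' → y ∈ C' →
      (y - x ∈ closure C' ↔ coneGauge C' x y ≤ 1) :=
    sub_mem_closure_iff_coneGauge_le_one hopen' hconv' hne' hcone' hproper' h0'
  refine ⟨fun hgr => ⟨fun x hx y hy hxy => ?_, fun c hc x hx => ?_, fun x hx y hy hxy => ?_⟩,
    fun ⟨hanti, hhom, hanti_inv⟩ x hx y hy => ?_⟩
  · rw [hle' (hg.mapsTo hy) (hg.mapsTo hx), hgr y hy x hx]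
    exact (hle hx hy).1 hxy
  · exact smul_eq_inv_smul_of_gaugeReversing hopen hconv hne hcone hproper h0 hopen' hconv' hne'
      hcone' hproper' h0' hg.mapsTo hgr hc hx
  · rw [hle hy hx, ← hgr x hx y hy]
    exact (hle' (hg.mapsTo hx) (hg.mapsTo hy)).1 hxy
  · exact gaugeReversing_of_antitone hopen hconv hne hcone hproper h0 hopen' hconv' hne' hcone'
      hproper' h0' hg.mapsTo hanti hhom hanti_inv hx hy

/-- A bijection `g` between two open proper convex cones is
gauge-reversing (`M(g(x)/g(y);C') = M(y/x;C)` for all `x, y ∈ C`) if and only if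
`g` is order-reversing, homogeneous of degree `−1`, and `g⁻¹` is
order-reversing.  Here `x ≤_C y` means `y − x ∈ closure C`, and
`M(x/y;C) := inf{λ > 0 : λ•y − x ∈ closure C}`. -/
theorem gaugeReversing_iff
    {V V' : Type*}
    [NormedAddCommGroup V] [NormedSpace ℝ V] [FiniteDimensional ℝ V]
    [NormedAddCommGroup V'] [NormedSpace ℝ V'] [FiniteDimensional ℝ V']
    (C : Set V) (C' : Set V')
    (hopen : IsOpen C) (hconv : Convex ℝ C) (hne : C.Nonempty)
    (hcone : ∀ (c : ℝ), 0 < c → ∀ x ∈ C, c • x ∈ C)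
    (hproper : ∀ v ∈ closure C, -v ∈ closure C → v = 0)
    (hopen' : IsOpen C') (hconv' : Convex ℝ C') (hne' : C'.Nonempty)
    (hcone' : ∀ (c : ℝ), 0 < c → ∀ x ∈ C', c • x ∈ C')
    (hproper' : ∀ v ∈ closure C', -v ∈ closure C' → v = 0)
    (M : V → V → ℝ) (hM : ∀ x y, M x y = sInf {l : ℝ | 0 < l ∧ l • y - x ∈ closure C})
    (M' : V' → V' → ℝ)
    (hM' : ∀ x y, M' x y = sInf {l : ℝ | 0 < l ∧ l • y - x ∈ closure C'})
    (g : V → V') (hg : Set.BijOn g C C') :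
    (∀ x ∈ C, ∀ y ∈ C, M' (g x) (g y) = M y x) ↔
    ((∀ x ∈ C, ∀ y ∈ C, y - x ∈ closure C → g x - g y ∈ closure C') ∧
     (∀ (c : ℝ), 0 < c → ∀ x ∈ C, g (c • x) = c⁻¹ • g x) ∧
     (∀ x ∈ C, ∀ y ∈ C, g y - g x ∈ closure C' → x - y ∈ closure C)) :=
  gaugeReversing_iff_general C C' hopen hconv hne hcone hproper hopen' hconv' hne' hcone' hproper' M
    hM M' hM' g hg
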